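/- arXiv:1810.04568 — 3 statements merged into one kernel-verified Lean document; each statement's English description precedes it below -/
import Mathlib

section
/- Let n > -1 and ν > -(n+1)/2, and let x > 0. Then ∫₀ˣ t^{-ν} L_{ν+n}(t) dt > x^{-ν} L_{ν+n+1}(x) − a_{ν,n} x^{n+2}. -/
/-!
With `c_{μ,k} = modStruveCoeff μ k`, the series `t ^ (-ν) L_μ(t) = ∑ c_{μ,k} t ^ (μ - ν + 1 + 2k)`
integrates term by term to `∑ c_{μ,k} x ^ (μ - ν + 2 + 2k) / (μ - ν + 2 + 2k)`, while the Gamma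
recursion `c_{μ+1,k} = c_{μ,k} / (2k + 2μ + 3)` writes `x ^ (-ν) L_{μ+1}(x)` as the same series with
denominators `2k + 2μ + 3`. These are the larger ones as soon as `μ + ν + 1 ≥ 0`, so
`x ^ (-ν) L_{μ+1}(x)` is already a lower bound for the integral; for `μ = ν + n` the hypotheses also
make `a_{ν,n}` positive.
-/

/-- The modified Struve function of the first kind. -/
noncomputable def modStruveL (ν x : ℝ) : ℝ :=
  ∑' k : ℕ, (x / 2) ^ (ν + 2 * (k : ℝ) + 1) /
    (Real.Gamma ((k : ℝ) + 3 / 2) * Real.Gamma ((k : ℝ) + ν + 3 / 2))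

/-- The constant `a_{ν,n}`. -/
noncomputable def aConst (ν n : ℝ) : ℝ :=
  (2 * ν + n + 1) /
    (Real.sqrt Real.pi * (2 : ℝ) ^ (ν + n + 2) * (n + 2) * (ν + n + 1) *
      Real.Gamma (ν + n + 5 / 2))

open Filter MeasureTheory Topology Real

theorem summable_of_forall_succ_eq_mul {α : Type*} [NormedRing α] [CompleteSpace α]
    {f g : ℕ → α} (hfg : ∀ k, f (k + 1) = f k * g k) (hg : Tendsto g atTop (𝓝 0)) :
    Summable f := by
  refine summable_of_ratio_norm_eventually_le (r := 1 / 2) (by norm_num) ?_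
  have hsmall : ∀ᶠ k in atTop, ‖g k‖ ≤ 1 / 2 :=
    hg.norm.eventually (ge_mem_nhds (by norm_num))
  filter_upwards [hsmall] with k hk
  calc ‖f (k + 1)‖ ≤ ‖f k‖ * ‖g k‖ := hfg k ▸ norm_mul_le _ _
    _ ≤ 1 / 2 * ‖f k‖ := by rw [mul_comm]; gcongr

noncomputable def modStruveCoeff (μ : ℝ) (k : ℕ) : ℝ :=
  2 ^ (-(μ + 2 * (k : ℝ) + 1)) / (Gamma ((k : ℝ) + 3 / 2) * Gamma ((k : ℝ) + μ + 3 / 2))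

section

variable {μ : ℝ}

theorem modStruveCoeff_pos (hμ : -3 / 2 < μ) (k : ℕ) : 0 < modStruveCoeff μ k := by
  have hk : (0 : ℝ) ≤ k := k.cast_nonneg
  exact div_pos (rpow_pos_of_pos two_pos _)
    (mul_pos (Gamma_pos_of_pos (by linarith)) (Gamma_pos_of_pos (by linarith)))

theorem modStruveCoeff_succ (hμ : -3 / 2 < μ) (k : ℕ) :
    modStruveCoeff μ (k + 1) =
      modStruveCoeff μ k / (4 * (((k : ℝ) + 3 / 2) * ((k : ℝ) + μ + 3 / 2))) := by
  have hk : (0 : ℝ) ≤ k := k.cast_nonneg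
  have h₁ : (k : ℝ) + 3 / 2 ≠ 0 := by positivity
  have h₂ : (k : ℝ) + μ + 3 / 2 ≠ 0 := by linarith
  have hpow : (2 : ℝ) ^ (-(μ + 2 * ((k + 1 : ℕ) : ℝ) + 1)) =
      2 ^ (-(μ + 2 * (k : ℝ) + 1)) / 4 := by
    rw [show -(μ + 2 * ((k + 1 : ℕ) : ℝ) + 1) = -(μ + 2 * (k : ℝ) + 1) - (2 : ℕ) by
      push_cast; ring, rpow_sub_natCast two_ne_zero]
    norm_num
  unfold modStruveCoeff
  rw [hpow, show ((k + 1 : ℕ) : ℝ) + 3 / 2 = (k + 3 / 2) + 1 by push_cast; ring,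
    show ((k + 1 : ℕ) : ℝ) + μ + 3 / 2 = (k + μ + 3 / 2) + 1 by push_cast; ring,
    Gamma_add_one h₁, Gamma_add_one h₂]
  field_simp

theorem modStruveCoeff_add_one (hμ : -3 / 2 < μ) (k : ℕ) :
    modStruveCoeff (μ + 1) k = modStruveCoeff μ k / (2 * ((k : ℝ) + μ + 3 / 2)) := by
  have hk : (0 : ℝ) ≤ k := k.cast_nonneg
  have h : (k : ℝ) + μ + 3 / 2 ≠ 0 := by linarith
  unfold modStruveCoeff
  rw [show -(μ + 1 + 2 * (k : ℝ) + 1) = -(μ + 2 * (k : ℝ) + 1) - (1 : ℕ) by push_cast; ring,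
    rpow_sub_natCast two_ne_zero, show (k : ℝ) + (μ + 1) + 3 / 2 = (k + μ + 3 / 2) + 1 by ring,
    Gamma_add_one h]
  field_simp

theorem summable_rpow_mul_modStruveCoeff (hμ : -3 / 2 < μ) {x : ℝ} (hx : 0 < x) (s : ℝ) :
    Summable fun k : ℕ ↦ x ^ (s + 2 * (k : ℝ)) * modStruveCoeff μ k := by
  refine summable_of_forall_succ_eq_mul
    (g := fun k : ℕ ↦ x ^ 2 / (4 * (((k : ℝ) + 3 / 2) * ((k : ℝ) + μ + 3 / 2)))) (fun k ↦ ?_) ?_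
  · rw [modStruveCoeff_succ hμ,
      show s + 2 * ((k + 1 : ℕ) : ℝ) = (s + 2 * k) + 2 by push_cast; ring, rpow_add hx, rpow_two]
    ring
  · have hk : Tendsto (fun k : ℕ ↦ (k : ℝ)) atTop atTop := tendsto_natCast_atTop_atTop
    have hden :
        Tendsto (fun k : ℕ ↦ 4 * (((k : ℝ) + 3 / 2) * ((k : ℝ) + μ + 3 / 2))) atTop atTop :=
      ((tendsto_atTop_add_const_right _ (3 / 2) hk).atTop_mul_atTop₀
        (tendsto_atTop_add_const_right _ (μ + 3 / 2) hk)).const_mul_atTop four_pos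
        |>.congr fun k ↦ by ring
    simpa [div_eq_mul_inv] using hden.inv_tendsto_atTop.const_mul (x ^ 2)

theorem hasSum_rpow_neg_mul_modStruveL (hμ : -3 / 2 < μ) (ν : ℝ) {x : ℝ} (hx : 0 < x) :
    HasSum (fun k : ℕ ↦ x ^ (μ - ν + 1 + 2 * (k : ℝ)) * modStruveCoeff μ k)
      (x ^ (-ν) * modStruveL μ x) := by
  convert (summable_rpow_mul_modStruveCoeff hμ hx (μ - ν + 1)).hasSum using 1
  unfold modStruveL modStruveCoeff
  rw [← tsum_mul_left]
  refine tsum_congr fun k ↦ ?_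
  have hsplit : x ^ (μ - ν + 1 + 2 * (k : ℝ)) = x ^ (-ν) * x ^ (μ + 2 * (k : ℝ) + 1) := by
    rw [← rpow_add hx]
    ring_nf
  rw [div_rpow hx.le zero_le_two, rpow_neg zero_le_two, hsplit]
  ring

theorem hasSum_integral_rpow_neg_mul_modStruveL (hμ : -3 / 2 < μ) {ν x : ℝ} (hμν : -2 < μ - ν)
    (hx : 0 < x) :
    HasSum (fun k : ℕ ↦ x ^ (μ - ν + 2 + 2 * (k : ℝ)) * modStruveCoeff μ k / (μ - ν + 2 + 2 * k))
      (∫ t in (0 : ℝ)..x, t ^ (-ν) * modStruveL μ t) := by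
  set F : ℕ → ℝ → ℝ := fun k t ↦ t ^ (μ - ν + 1 + 2 * (k : ℝ)) * modStruveCoeff μ k
  have hexp (k : ℕ) : -1 < μ - ν + 1 + 2 * (k : ℝ) := by have := k.cast_nonneg (α := ℝ); linarith
  have hF_int (k : ℕ) : IntegrableOn (F k) (Set.Ioc 0 x) :=
    ((intervalIntegral.intervalIntegrable_rpow' (hexp k)).mul_const _).1
  have hF_integral (k : ℕ) : ∫ t in Set.Ioc 0 x, F k t =
      x ^ (μ - ν + 2 + 2 * (k : ℝ)) * modStruveCoeff μ k / (μ - ν + 2 + 2 * k) := by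
    have hne : μ - ν + 1 + 2 * (k : ℝ) + 1 ≠ 0 := by linarith [hexp k]
    rw [← intervalIntegral.integral_of_le hx.le, intervalIntegral.integral_mul_const,
      integral_rpow (Or.inl (hexp k)), zero_rpow hne,
      show μ - ν + 1 + 2 * (k : ℝ) + 1 = μ - ν + 2 + 2 * k by ring]
    ring
  have hF_norm (k : ℕ) : ∫ t in Set.Ioc 0 x, ‖F k t‖ = ∫ t in Set.Ioc 0 x, F k t :=
    setIntegral_congr_fun measurableSet_Ioc fun t ht ↦
      norm_of_nonneg (mul_nonneg (rpow_nonneg ht.1.le _) (modStruveCoeff_pos hμ k).le)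
  have hsum : Summable fun k : ℕ ↦
      x ^ (μ - ν + 2 + 2 * (k : ℝ)) * modStruveCoeff μ k / (μ - ν + 2 + 2 * k) := by
    refine ((summable_rpow_mul_modStruveCoeff hμ hx (μ - ν + 2)).div_const
      (μ - ν + 2)).of_nonneg_of_le (fun k ↦ ?_) (fun k ↦ ?_)
    · have := modStruveCoeff_pos hμ k
      have := k.cast_nonneg (α := ℝ)
      exact div_nonneg (by positivity) (by linarith)
    · have := modStruveCoeff_pos hμ k
      exact div_le_div_of_nonneg_left (by positivity) (by linarith)
        (by linarith [k.cast_nonneg (α := ℝ)])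
  have key := hasSum_integral_of_summable_integral_norm hF_int (hsum.congr fun k ↦ by
    rw [hF_norm, hF_integral])
  simp only [hF_integral] at key
  rw [intervalIntegral.integral_of_le hx.le, setIntegral_congr_fun measurableSet_Ioc fun t ht ↦
    (hasSum_rpow_neg_mul_modStruveL hμ ν ht.1).tsum_eq.symm]
  exact key

theorem rpow_neg_mul_modStruveL_add_one_le_integral {ν x : ℝ} (hμν : -2 < μ - ν)
    (hμν' : 0 ≤ μ + ν + 1) (hx : 0 < x) :
    x ^ (-ν) * modStruveL (μ + 1) x ≤ ∫ t in (0 : ℝ)..x, t ^ (-ν) * modStruveL μ t := by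
  have hμ : -3 / 2 < μ := by linarith
  refine hasSum_le (fun k ↦ ?_) (hasSum_rpow_neg_mul_modStruveL (by linarith) ν hx)
    (hasSum_integral_rpow_neg_mul_modStruveL hμ hμν hx)
  have hk := k.cast_nonneg (α := ℝ)
  have := modStruveCoeff_pos hμ k
  rw [modStruveCoeff_add_one hμ, show μ + 1 - ν + 1 + 2 * (k : ℝ) = μ - ν + 2 + 2 * k by ring,
    mul_div_assoc']
  exact div_le_div_of_nonneg_left (by positivity) (by linarith) (by linarith)

end

theorem aConst_pos {ν n : ℝ} (hn : -1 < n) (hν : -((n + 1) / 2) < ν) : 0 < aConst ν n := by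
  have hΓ : 0 < Gamma (ν + n + 5 / 2) := Gamma_pos_of_pos (by linarith)
  have hν' : 0 < ν + n + 1 := by linarith
  have hn' : 0 < n + 2 := by linarith
  have := sqrt_pos.mpr pi_pos
  have := rpow_pos_of_pos two_pos (ν + n + 2)
  exact div_pos (by linarith) (by positivity)

theorem struve_integral_lower_bound_shift (ν n x : ℝ) (hn : n > -1)
    (hν : ν > -((n + 1) / 2)) (hx : x > 0) :
    ∫ t in (0 : ℝ)..x, t ^ (-ν) * modStruveL (ν + n) t >
      x ^ (-ν) * modStruveL (ν + n + 1) x - aConst ν n * x ^ (n + 2) := by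
  have hle := rpow_neg_mul_modStruveL_add_one_le_integral (μ := ν + n) (ν := ν)
    (by linarith) (by linarith) hx
  have hpos := mul_pos (aConst_pos hn hν) (rpow_pos_of_pos hx (n + 2))
  linarith
end

section
/- Let n > -1 and ν = -(n+1)/2, and let x > 0. Then ∫₀ˣ t^{-ν} L_{ν+n}(t) dt = x^{-ν} L_{ν+n+1}(x) − a_{ν,n} x^{n+2}, and also ∫₀ˣ t^{-ν} L_{ν+n}(t) dt = (2(ν+n+1)/(n+1)) x^{-ν} L_{ν+n+1}(x) − ((2ν+n+1)/(n+1)) x^{-ν} L_{ν+n+3}(x) + b_{ν,n} x^{n+4} − c_{ν,n} x^{n+2}; that is, equality holds in both the lower and upper bound inequalities when ν = -(n+1)/2. -/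
/-- The constant `b_{ν,n}`. -/
noncomputable def bConst (ν n : ℝ) : ℝ :=
  ((2 * ν + n + 1) * (2 * ν + n + 3)) /
    (Real.sqrt Real.pi * (2 : ℝ) ^ (ν + n + 4) * (n + 1) * (n + 4) * (ν + n + 3) *
      Real.Gamma (ν + n + 9 / 2))

/-- The constant `c_{ν,n}`. -/
noncomputable def cConst (ν n : ℝ) : ℝ :=
  (2 * ν + n + 1) /
    (Real.sqrt Real.pi * (2 : ℝ) ^ (ν + n + 1) * (n + 1) * (n + 2) *
      Real.Gamma (ν + n + 5 / 2))

/-!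
When `2ν + n + 1 = 0` the constants `a`, `b`, `c` and the coefficient of `L_{ν+n+3}` vanish,
`2(ν+n+1)/(n+1) = 1`, and `-ν = μ + 1` for `μ = ν + n`; both equalities become the classical
`∫₀ˣ t^{μ+1} L_μ(t) dt = x^{μ+1} L_{μ+1}(x)`, valid for `μ > -3/2`. It follows by integrating the
series termwise (the terms are positive, so the interchange is justified by the summability of
the integrals): the `k`-th term of `t^{μ+1} L_μ(t)` is a multiple of `t^{2μ+2k+2}`, and the factor
`1/(2μ+2k+3)` produced by integration is absorbed by `Γ(k+μ+5/2) = (k+μ+3/2) Γ(k+μ+3/2)`.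
-/

open MeasureTheory Real Set Filter Topology

theorem intervalIntegral_tsum_of_nonneg {ι : Type*} [Countable ι] {f : ι → ℝ → ℝ} {a b : ℝ}
    (hab : a ≤ b) (hf : ∀ i, IntervalIntegrable (f i) volume a b)
    (hf₀ : ∀ i, ∀ t ∈ Ioc a b, 0 ≤ f i t) (hsum : Summable fun i ↦ ∫ t in a..b, f i t) :
    ∫ t in a..b, ∑' i, f i t = ∑' i, ∫ t in a..b, f i t := by
  simp only [intervalIntegral.integral_of_le hab] at hsum ⊢
  refine (integral_tsum_of_summable_integral_norm (fun i ↦ (hf i).1) (hsum.congr fun i ↦ ?_)).symm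
  exact setIntegral_congr_fun measurableSet_Ioc fun t ht ↦ (Real.norm_of_nonneg (hf₀ i t ht)).symm

noncomputable def modStruveTerm (μ x : ℝ) (k : ℕ) : ℝ :=
  (x / 2) ^ (μ + 2 * (k : ℝ) + 1) /
    (Real.Gamma ((k : ℝ) + 3 / 2) * Real.Gamma ((k : ℝ) + μ + 3 / 2))

theorem modStruveL_eq_tsum (μ x : ℝ) : modStruveL μ x = ∑' k, modStruveTerm μ x k := rfl

section StruveTerm

variable {μ x : ℝ}

theorem modStruveTerm_pos (hμ : -3 / 2 < μ) (hx : 0 < x) (k : ℕ) : 0 < modStruveTerm μ x k := by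
  have hk : (0 : ℝ) ≤ k := k.cast_nonneg
  exact div_pos (rpow_pos_of_pos (by positivity) _)
    (mul_pos (Gamma_pos_of_pos (by linarith)) (Gamma_pos_of_pos (by linarith)))

theorem modStruveTerm_succ (hμ : -3 / 2 < μ) (hx : 0 < x) (k : ℕ) :
    modStruveTerm μ x (k + 1) =
      modStruveTerm μ x k * ((x / 2) ^ 2 / ((k + 3 / 2) * (k + μ + 3 / 2))) := by
  have hk : (0 : ℝ) ≤ k := k.cast_nonneg
  have h₁ : (k : ℝ) + 3 / 2 ≠ 0 := by linarith
  have h₂ : (k : ℝ) + μ + 3 / 2 ≠ 0 := by linarith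
  have hΓ₁ := (Gamma_pos_of_pos (by linarith : (0 : ℝ) < k + 3 / 2)).ne'
  have hΓ₂ := (Gamma_pos_of_pos (by linarith : (0 : ℝ) < k + μ + 3 / 2)).ne'
  have hexp : μ + 2 * ((k + 1 : ℕ) : ℝ) + 1 = (μ + 2 * k + 1) + (2 : ℕ) := by push_cast; ring
  simp only [modStruveTerm]
  rw [hexp, rpow_add (by positivity), rpow_natCast, Nat.cast_succ,
    show (k : ℝ) + 1 + 3 / 2 = (k + 3 / 2) + 1 by ring, Gamma_add_one h₁,
    show (k : ℝ) + 1 + μ + 3 / 2 = (k + μ + 3 / 2) + 1 by ring, Gamma_add_one h₂]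
  field_simp

theorem summable_modStruveTerm (hμ : -3 / 2 < μ) (hx : 0 < x) :
    Summable (modStruveTerm μ x) := by
  refine summable_of_ratio_test_tendsto_lt_one zero_lt_one
    (.of_forall fun k ↦ (modStruveTerm_pos hμ hx k).ne') ?_
  have hden : Tendsto (fun k : ℕ ↦ ((k : ℝ) + 3 / 2) * (k + μ + 3 / 2)) atTop atTop :=
    (tendsto_atTop_add_const_right _ _ tendsto_natCast_atTop_atTop).atTop_mul_atTop₀
      (tendsto_atTop_add_const_right _ _
        (tendsto_atTop_add_const_right _ _ tendsto_natCast_atTop_atTop))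
  refine ((tendsto_const_nhds (x := (x / 2) ^ 2)).div_atTop hden).congr fun k ↦ ?_
  have hpos := modStruveTerm_pos hμ hx k
  rw [modStruveTerm_succ hμ hx, norm_mul, Real.norm_of_nonneg hpos.le,
    mul_div_cancel_left₀ _ hpos.ne', Real.norm_of_nonneg (by
      have hk : (0 : ℝ) ≤ k := k.cast_nonneg
      exact div_nonneg (by positivity) (mul_nonneg (by linarith) (by linarith)))]

theorem rpow_mul_modStruveTerm {t : ℝ} (ht : 0 < t) (a : ℝ) (k : ℕ) :
    t ^ a * modStruveTerm μ t k =
      t ^ (a + (μ + 2 * k + 1)) /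
        (2 ^ (μ + 2 * (k : ℝ) + 1) *
          (Real.Gamma ((k : ℝ) + 3 / 2) * Real.Gamma ((k : ℝ) + μ + 3 / 2))) := by
  rw [modStruveTerm, div_rpow ht.le zero_le_two, rpow_add ht a]
  ring

theorem eqOn_rpow_mul_modStruveTerm (hx : 0 ≤ x) (k : ℕ) :
    EqOn (fun t ↦ t ^ ((μ + 1) + (μ + 2 * k + 1)) /
        (2 ^ (μ + 2 * (k : ℝ) + 1) *
          (Real.Gamma ((k : ℝ) + 3 / 2) * Real.Gamma ((k : ℝ) + μ + 3 / 2))))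
      (fun t ↦ t ^ (μ + 1) * modStruveTerm μ t k) (uIoo 0 x) := fun t ht ↦ by
  rw [uIoo_of_le hx] at ht
  exact (rpow_mul_modStruveTerm ht.1 _ k).symm

theorem intervalIntegrable_rpow_mul_modStruveTerm (hμ : -3 / 2 < μ) (hx : 0 ≤ x) (k : ℕ) :
    IntervalIntegrable (fun t ↦ t ^ (μ + 1) * modStruveTerm μ t k) volume 0 x := by
  have hk : (0 : ℝ) ≤ k := k.cast_nonneg
  exact ((intervalIntegral.intervalIntegrable_rpow' (by linarith)).div_const _).congr_uIoo
    (eqOn_rpow_mul_modStruveTerm hx k)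

theorem integral_rpow_mul_modStruveTerm (hμ : -3 / 2 < μ) (hx : 0 < x) (k : ℕ) :
    ∫ t in 0..x, t ^ (μ + 1) * modStruveTerm μ t k = x ^ (μ + 1) * modStruveTerm (μ + 1) x k := by
  have hk : (0 : ℝ) ≤ k := k.cast_nonneg
  have hΓ := (Gamma_pos_of_pos (by linarith : (0 : ℝ) < k + μ + 3 / 2)).ne'
  rw [← intervalIntegral.integral_congr_uIoo (eqOn_rpow_mul_modStruveTerm hx.le k),
    intervalIntegral.integral_div, integral_rpow (.inl (by linarith)),
    zero_rpow (by linarith), sub_zero, rpow_mul_modStruveTerm hx,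
    show (k : ℝ) + (μ + 1) + 3 / 2 = (k + μ + 3 / 2) + 1 by ring, Gamma_add_one (by linarith),
    show μ + 1 + 2 * (k : ℝ) + 1 = (μ + 2 * k + 1) + 1 by ring,
    rpow_add_one two_ne_zero (μ + 2 * k + 1),
    show (μ + 1) + (μ + 2 * k + 1 + 1) = (μ + 1) + (μ + 2 * k + 1) + 1 by ring]
  field_simp
  ring

end StruveTerm

theorem integral_rpow_mul_modStruveL {μ x : ℝ} (hμ : -3 / 2 < μ) (hx : 0 < x) :
    ∫ t in 0..x, t ^ (μ + 1) * modStruveL μ t = x ^ (μ + 1) * modStruveL (μ + 1) x := by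
  simp only [modStruveL_eq_tsum, ← tsum_mul_left]
  rw [intervalIntegral_tsum_of_nonneg hx.le (intervalIntegrable_rpow_mul_modStruveTerm hμ hx.le)
    (fun k t ht ↦ mul_nonneg (rpow_nonneg ht.1.le _) (modStruveTerm_pos hμ ht.1 k).le)
    (by simpa only [integral_rpow_mul_modStruveTerm hμ hx] using
      (summable_modStruveTerm (by linarith) hx).mul_left _)]
  exact tsum_congr (integral_rpow_mul_modStruveTerm hμ hx)

theorem struve_integral_equality_case (ν n x : ℝ) (hn : n > -1)
    (hν : ν = -((n + 1) / 2)) (hx : x > 0) :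
    (∫ t in (0 : ℝ)..x, t ^ (-ν) * modStruveL (ν + n) t =
      x ^ (-ν) * modStruveL (ν + n + 1) x - aConst ν n * x ^ (n + 2)) ∧
    (∫ t in (0 : ℝ)..x, t ^ (-ν) * modStruveL (ν + n) t =
      (2 * (ν + n + 1) / (n + 1)) * (x ^ (-ν) * modStruveL (ν + n + 1) x) -
        ((2 * ν + n + 1) / (n + 1)) * (x ^ (-ν) * modStruveL (ν + n + 3) x) +
        bConst ν n * x ^ (n + 4) - cConst ν n * x ^ (n + 2)) := by
  have h2ν : 2 * ν + n + 1 = 0 := by rw [hν]; ring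
  have hintegral : ∫ t in (0 : ℝ)..x, t ^ (-ν) * modStruveL (ν + n) t =
      x ^ (-ν) * modStruveL (ν + n + 1) x := by
    rw [show -ν = ν + n + 1 by linarith]
    exact integral_rpow_mul_modStruveL (by linarith) hx
  have ha : aConst ν n = 0 := by rw [aConst, h2ν, zero_div]
  have hb : bConst ν n = 0 := by rw [bConst, h2ν, zero_mul, zero_div]
  have hc : cConst ν n = 0 := by rw [cConst, h2ν, zero_div]
  have hcoef : 2 * (ν + n + 1) / (n + 1) = 1 := by
    rw [div_eq_one_iff_eq (by linarith)]
    linarith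
  refine ⟨?_, ?_⟩
  · rw [hintegral, ha]; ring
  · rw [hintegral, hb, hc, hcoef, h2ν]; ring
end

section
/- Let n > -1 and ν > -(n+1)/2, and let D > 0 be a constant such that for all x > 0, ∫₀ˣ t^{-ν} L_{ν+n}(t) dt ≤ D · x^{-ν} L_{ν+n}(x). Suppose 0 < γ < 1/D. Then for all x > 0, ∫₀ˣ e^{-γt} t^{-ν} L_{ν+n}(t) dt < (e^{-γx} / (1 − Dγ)) ∫₀ˣ t^{-ν} L_{ν+n}(t) dt. -/
/-!
Writing `h t = t ^ (-ν) * L_{ν+n}(t)` and `F x = ∫₀ˣ h`, integration by parts gives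
`∫₀ˣ e^{-γt} h = e^{-γx} F x + γ ∫₀ˣ e^{-γt} F ≤ e^{-γx} F x + D γ ∫₀ˣ e^{-γt} h`, which rearranges
to the claim since `D γ < 1`. The inequality is strict because `h` is positive and increasing on
`(0, ∞)`, so `F t ≤ t h t < D h t` for `0 < t < D`. Positivity, monotonicity and continuity of `h`
come from the representation `h t = 2 ^ (-ν) (t/2) ^ (n+1) g((t/2)²)`, where `g` is an entire power
series with positive coefficients.
-/

open Real Set Filter FormalMultilinearSeries

namespace ModStruve

noncomputable def coeff (a : ℝ) (k : ℕ) : ℝ := (Gamma (k + 3 / 2) * Gamma (k + a))⁻¹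

noncomputable def series (a : ℝ) : FormalMultilinearSeries ℝ ℝ ℝ := ofScalars ℝ (coeff a)

variable {a : ℝ}

lemma coeff_pos (ha : 0 < a) (k : ℕ) : 0 < coeff a k :=
  inv_pos.2 (mul_pos (Gamma_pos_of_pos (by positivity)) (Gamma_pos_of_pos (by positivity)))

lemma coeff_succ (ha : 0 < a) (k : ℕ) :
    coeff a (k + 1) = ((k + 3 / 2) * (k + a))⁻¹ * coeff a k := by
  have h₁ : Gamma ((k + 1 : ℕ) + 3 / 2) = (k + 3 / 2) * Gamma (k + 3 / 2) := by
    rw [← Gamma_add_one (by positivity)]; push_cast; ring_nf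
  have h₂ : Gamma ((k + 1 : ℕ) + a) = (k + a) * Gamma (k + a) := by
    rw [← Gamma_add_one (by positivity)]; push_cast; ring_nf
  simp only [coeff, h₁, h₂, mul_inv]
  ring

lemma radius_series (ha : 0 < a) : (series a).radius = ⊤ := by
  refine ofScalars_radius_eq_top_of_tendsto ℝ _
    (Eventually.of_forall fun k => (coeff_pos ha k).ne') ?_
  have hgrow : Tendsto (fun k : ℕ => ((k : ℝ) + 3 / 2) * (k + a)) atTop atTop :=
    (tendsto_atTop_add_const_right _ _ tendsto_natCast_atTop_atTop).atTop_mul_atTop₀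
      (tendsto_atTop_add_const_right _ _ tendsto_natCast_atTop_atTop)
  refine (tendsto_inv_atTop_zero.comp hgrow).congr fun k => ?_
  rw [Nat.succ_eq_add_one, coeff_succ ha, norm_mul, norm_inv,
    mul_div_cancel_right₀ _ (norm_ne_zero_iff.2 (coeff_pos ha k).ne'),
    Real.norm_of_nonneg (by positivity)]
  rfl

lemma continuous_sum (ha : 0 < a) : Continuous (series a).sum := by
  rw [← continuousOn_univ, ← Metric.eball_top (0 : ℝ), ← radius_series ha]
  exact (series a).continuousOn

lemma hasSum_sum (ha : 0 < a) (u : ℝ) :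
    HasSum (fun k => coeff a k * u ^ k) ((series a).sum u) := by
  simpa [series, ofScalars_apply_eq, mul_comm] using
    (series a).hasSum (x := u) (by simp [radius_series ha])

lemma sum_pos (ha : 0 < a) {u : ℝ} (hu : 0 ≤ u) : 0 < (series a).sum u :=
  hasSum_lt (fun k => by have := coeff_pos ha k; positivity) (i := 0)
    (by simpa using coeff_pos ha 0) hasSum_zero (hasSum_sum ha u)

lemma monotoneOn_sum (ha : 0 < a) : MonotoneOn (series a).sum (Ici 0) := fun u hu v _ huv =>
  hasSum_le (fun k => by have := coeff_pos ha k; gcongr) (hasSum_sum ha u) (hasSum_sum ha v)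

noncomputable def profile (a p t : ℝ) : ℝ := (t / 2) ^ p * (series a).sum ((t / 2) ^ 2)

variable {p : ℝ}

lemma continuous_profile (ha : 0 < a) (hp : 0 ≤ p) : Continuous (profile a p) :=
  ((continuous_rpow_const hp).comp (continuous_id.div_const 2)).mul
    ((continuous_sum ha).comp ((continuous_id.div_const 2).pow 2))

lemma profile_pos (ha : 0 < a) {t : ℝ} (ht : 0 < t) : 0 < profile a p t :=
  mul_pos (rpow_pos_of_pos (half_pos ht) p) (sum_pos ha (sq_nonneg _))

lemma monotoneOn_profile (ha : 0 < a) (hp : 0 ≤ p) : MonotoneOn (profile a p) (Ici 0) := by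
  have hhalf : MonotoneOn (fun t : ℝ => t / 2) (Ici 0) := fun s _ t _ hst => by linarith
  refine MonotoneOn.mul (f := fun t => (t / 2) ^ p) ?_ ?_ ?_ ?_
  · exact fun s hs t ht hst => rpow_le_rpow (div_nonneg hs zero_le_two) (hhalf hs ht hst) hp
  · exact fun s hs t ht hst => monotoneOn_sum ha (mem_Ici.2 (sq_nonneg _)) (mem_Ici.2 (sq_nonneg _))
      (pow_le_pow_left₀ (div_nonneg hs zero_le_two) (hhalf hs ht hst) 2)
  · exact fun t ht => rpow_nonneg (div_nonneg ht zero_le_two) p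
  · exact fun t _ => (sum_pos ha (sq_nonneg _)).le

end ModStruve

open ModStruve

lemma modStruveL_eq_profile {μ t : ℝ} (hμ : 0 < μ + 3 / 2) (ht : 0 < t) :
    modStruveL μ t = profile (μ + 3 / 2) (μ + 1) t := by
  rw [profile, ← (hasSum_sum hμ _).tsum_eq, ← tsum_mul_left, modStruveL]
  refine tsum_congr fun k => ?_
  rw [show μ + 2 * (k : ℝ) + 1 = (μ + 1) + ((2 * k : ℕ) : ℝ) by push_cast; ring,
    rpow_add (half_pos ht), rpow_natCast, pow_mul, ModStruve.coeff, add_assoc (k : ℝ) μ]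
  ring

lemma modStruveL_zero {μ : ℝ} (hμ : 0 < μ + 1) : modStruveL μ 0 = 0 := by
  refine (tsum_congr fun k => ?_).trans tsum_zero
  have : (0 : ℝ) ≤ k := k.cast_nonneg
  rw [zero_div, zero_rpow (by linarith), zero_div]

lemma rpow_neg_mul_modStruveL {ν n t : ℝ} (hn : 0 < n + 1) (hνn : 0 < ν + n + 1) (ht : 0 ≤ t) :
    t ^ (-ν) * modStruveL (ν + n) t = 2 ^ (-ν) * profile (ν + n + 3 / 2) (n + 1) t := by
  rcases ht.eq_or_lt with rfl | ht
  · rw [modStruveL_zero hνn, profile, zero_div, zero_rpow hn.ne']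
    simp
  have hsplit : t ^ (-ν) = 2 ^ (-ν) * (t / 2) ^ (-ν) := by
    rw [← mul_rpow zero_le_two (half_pos ht).le, mul_div_cancel₀ t two_ne_zero]
  have hcombine : (t / 2) ^ (-ν) * (t / 2) ^ (ν + n + 1) = (t / 2) ^ (n + 1) := by
    rw [← rpow_add (half_pos ht)]; ring_nf
  rw [modStruveL_eq_profile (by linarith) ht, profile, profile, hsplit, ← hcombine]
  ring

section ExponentialWeight

variable {h : ℝ → ℝ} {D γ x : ℝ}

lemma integral_exp_mul_eq (hc : Continuous h) (γ x : ℝ) :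
    ∫ t in (0 : ℝ)..x, exp (-γ * t) * h t =
      exp (-γ * x) * (∫ t in (0 : ℝ)..x, h t) +
        γ * ∫ t in (0 : ℝ)..x, exp (-γ * t) * ∫ s in (0 : ℝ)..t, h s := by
  have hF : ∀ t, HasDerivAt (fun t => ∫ s in (0 : ℝ)..t, h s) (h t) t := fun t =>
    hc.integral_hasStrictDerivAt 0 t |>.hasDerivAt
  have hexp : ∀ t, HasDerivAt (fun t => exp (-γ * t)) (-γ * exp (-γ * t)) t := fun t => by
    simpa [mul_comm] using ((hasDerivAt_id t).const_mul (-γ)).exp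
  rw [intervalIntegral.integral_mul_deriv_eq_deriv_mul (fun t _ => hexp t) (fun t _ => hF t)
      ((by fun_prop : Continuous fun t => -γ * exp (-γ * t)).intervalIntegrable 0 x)
      (hc.intervalIntegrable 0 x),
    intervalIntegral.integral_same, mul_zero, sub_zero]
  simp only [mul_assoc, intervalIntegral.integral_const_mul]
  ring

lemma integral_le_mul_of_monotoneOn {t : ℝ} (ht : 0 ≤ t) (hc : Continuous h)
    (hmono : MonotoneOn h (Ici 0)) : ∫ s in (0 : ℝ)..t, h s ≤ t * h t := by
  simpa using intervalIntegral.integral_mono_on ht (hc.intervalIntegrable 0 t)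
    (intervalIntegrable_const (μ := MeasureTheory.volume)) fun s hs => hmono hs.1 ht hs.2

lemma integral_exp_mul_integral_lt (hc : Continuous h) (hmono : MonotoneOn h (Ici 0))
    (hpos : ∀ t > 0, 0 < h t) (hD : 0 < D)
    (hbound : ∀ t > 0, ∫ s in (0 : ℝ)..t, h s ≤ D * h t) (hx : 0 < x) :
    ∫ t in (0 : ℝ)..x, exp (-γ * t) * ∫ s in (0 : ℝ)..t, h s <
      D * ∫ t in (0 : ℝ)..x, exp (-γ * t) * h t := by
  have hFc : Continuous fun t => ∫ s in (0 : ℝ)..t, h s :=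
    intervalIntegral.continuous_primitive (fun a b => hc.intervalIntegrable a b) 0
  rw [← intervalIntegral.integral_const_mul]
  refine intervalIntegral.integral_lt_integral_of_continuousOn_of_le_of_exists_lt hx
    (by fun_prop) (by fun_prop) (fun t ht => ?_) ?_
  · rw [mul_left_comm]
    exact mul_le_mul_of_nonneg_left (hbound t ht.1) (exp_pos _).le
  -- for `t < D`, monotonicity gives `∫₀ᵗ h ≤ t h(t) < D h(t)`
  have hmin : 0 < min D x := lt_min hD hx
  set t₀ := min D x / 2
  have ht₀ : 0 < t₀ := half_pos hmin
  refine ⟨t₀, ⟨ht₀.le, (half_le_self hmin.le).trans (min_le_right D x)⟩, ?_⟩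
  rw [mul_left_comm]
  refine mul_lt_mul_of_pos_left ?_ (exp_pos _)
  calc ∫ s in (0 : ℝ)..t₀, h s ≤ t₀ * h t₀ := integral_le_mul_of_monotoneOn ht₀.le hc hmono
    _ < D * h t₀ :=
      mul_lt_mul_of_pos_right ((half_lt_self hmin).trans_le (min_le_left D x)) (hpos t₀ ht₀)

theorem one_sub_mul_integral_exp_mul_lt (hc : Continuous h) (hmono : MonotoneOn h (Ici 0))
    (hpos : ∀ t > 0, 0 < h t) (hD : 0 < D)
    (hbound : ∀ t > 0, ∫ s in (0 : ℝ)..t, h s ≤ D * h t) (hγ : 0 < γ) (hx : 0 < x) :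
    (1 - D * γ) * ∫ t in (0 : ℝ)..x, exp (-γ * t) * h t <
      exp (-γ * x) * ∫ t in (0 : ℝ)..x, h t := by
  have := mul_lt_mul_of_pos_left
    (integral_exp_mul_integral_lt (γ := γ) hc hmono hpos hD hbound hx) hγ
  linarith [integral_exp_mul_eq hc γ x]

end ExponentialWeight

theorem struve_exp_integral_upper_bound_one (ν n D γ : ℝ) (hn : n > -1)
    (hν : ν > -((n + 1) / 2)) (hD : D > 0)
    (hbound : ∀ x > (0 : ℝ), ∫ t in (0 : ℝ)..x, t ^ (-ν) * modStruveL (ν + n) t ≤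
      D * (x ^ (-ν) * modStruveL (ν + n) x))
    (hγ1 : 0 < γ) (hγ2 : γ < 1 / D) (x : ℝ) (hx : x > 0) :
    ∫ t in (0 : ℝ)..x, Real.exp (-γ * t) * (t ^ (-ν) * modStruveL (ν + n) t) <
      (Real.exp (-γ * x) / (1 - D * γ)) *
        ∫ t in (0 : ℝ)..x, t ^ (-ν) * modStruveL (ν + n) t := by
  have hn1 : 0 < n + 1 := by linarith
  have ha : 0 < ν + n + 3 / 2 := by linarith
  set h : ℝ → ℝ := fun t => 2 ^ (-ν) * profile (ν + n + 3 / 2) (n + 1) t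
  have heq : ∀ t ≥ 0, t ^ (-ν) * modStruveL (ν + n) t = h t := fun t ht =>
    rpow_neg_mul_modStruveL hn1 (by linarith) ht
  have hint : ∀ y ≥ 0,
      ∫ t in (0 : ℝ)..y, t ^ (-ν) * modStruveL (ν + n) t = ∫ t in (0 : ℝ)..y, h t :=
    fun y hy => intervalIntegral.integral_congr fun t ht => heq t (uIcc_of_le hy ▸ ht).1
  have hexp_int : ∫ t in (0 : ℝ)..x, exp (-γ * t) * (t ^ (-ν) * modStruveL (ν + n) t) =
      ∫ t in (0 : ℝ)..x, exp (-γ * t) * h t :=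
    intervalIntegral.integral_congr fun t ht => by
      simp only [heq t (uIcc_of_le hx.le ▸ ht).1]
  have hkey := one_sub_mul_integral_exp_mul_lt (h := h)
    (continuous_const.mul (continuous_profile ha hn1.le))
    ((monotone_mul_left_of_nonneg (by positivity)).comp_monotoneOn
      (monotoneOn_profile ha hn1.le))
    (fun t ht => mul_pos (by positivity) (profile_pos ha ht)) hD
    (fun y hy => by simpa only [hint y hy.le, heq y hy.le] using hbound y hy) hγ1 hx
  have hDγ : 0 < 1 - D * γ := sub_pos.2 ((lt_div_iff₀' hD).1 hγ2)
  rwa [hexp_int, hint x hx.le, div_mul_eq_mul_div, lt_div_iff₀ hDγ, mul_comm]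
end
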